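/- arXiv:2506.13429 — 4 statements merged into one kernel-verified Lean document; each statement's English description precedes it below -/
import Mathlib

section
/- Let K be a finite simplicial complex, let L ⊆ K be a subcomplex of K, and let p ∈ ℕ₀. Then |β_p(K) − β_p(L)| ≤ (f_p(K) − f_p(L)) + (f_{p+1}(K) − f_{p+1}(L)). -/
namespace RSC

variable {V : Type*} [DecidableEq V]

/-- A finite abstract simplicial complex on vertex type `V`. -/
structure SC (V : Type*) [DecidableEq V] where
  simplices : Finset (Finset V)
  nonempty_mem : ∀ σ ∈ simplices, σ.Nonempty
  down_closed : ∀ σ ∈ simplices, ∀ τ ⊆ σ, τ.Nonempty → τ ∈ simplices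

namespace SC

/-- The `p`-simplices (cardinality `p+1`). -/
def simplicesDim (K : SC V) (p : ℕ) : Finset (Finset V) :=
  K.simplices.filter fun σ => σ.card = p + 1

/-- The number of `p`-simplices. -/
def fnum (K : SC V) (p : ℕ) : ℕ := (K.simplicesDim p).card

/-- The dimension of a finite simplicial complex. -/
def dimension (K : SC V) : ℕ := K.simplices.sup fun σ => σ.card - 1

/-- The `p`-th chain group over `ℤ₂`. -/
abbrev Chain (K : SC V) (p : ℕ) : Type _ := ↥(K.simplicesDim p) → ZMod 2

/-- The boundary map `∂_{p+1} : C_{p+1} → C_p`. -/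
def boundary (K : SC V) (p : ℕ) : Chain K (p + 1) →ₗ[ZMod 2] Chain K p where
  toFun f := fun τ => ∑ σ : ↥(K.simplicesDim (p + 1)),
    if (τ : Finset V) ⊆ (σ : Finset V) then f σ else 0
  map_add' f g := by
    funext τ
    simp only [Pi.add_apply]
    rw [← Finset.sum_add_distrib]
    refine Finset.sum_congr rfl fun σ _ => ?_
    split <;> simp
  map_smul' c f := by
    funext τ
    simp only [Pi.smul_apply, smul_eq_mul, RingHom.id_apply]
    rw [Finset.mul_sum]
    refine Finset.sum_congr rfl fun σ _ => ?_
    split <;> simp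

/-- The rank of the cycle space `Z_p = ker ∂_p` (with `∂_0 = 0`). -/
noncomputable def cycleRank (K : SC V) : ℕ → ℕ
  | 0 => Module.finrank (ZMod 2) (Chain K 0)
  | (q + 1) => Module.finrank (ZMod 2) (LinearMap.ker (K.boundary q))

/-- The `p`-th Betti number over `ℤ₂`: `dim Z_p − dim B_p`. -/
noncomputable def betti (K : SC V) (p : ℕ) : ℕ :=
  K.cycleRank p - Module.finrank (ZMod 2) (LinearMap.range (K.boundary p))

/-- The induced subcomplex on a vertex set `I`. -/
def induced (K : SC V) (I : Finset V) : SC V where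
  simplices := K.simplices.filter fun σ => σ ⊆ I
  nonempty_mem := fun σ hσ => K.nonempty_mem σ (Finset.mem_filter.mp hσ).1
  down_closed := fun σ hσ τ hτσ hτ => by
    rw [Finset.mem_filter] at hσ ⊢
    exact ⟨K.down_closed σ hσ.1 τ hτσ hτ, hτσ.trans hσ.2⟩

/-- The `j`-skeleton. -/
def skeleton (K : SC V) (j : ℕ) : SC V where
  simplices := K.simplices.filter fun σ => σ.card ≤ j + 1
  nonempty_mem := fun σ hσ => K.nonempty_mem σ (Finset.mem_filter.mp hσ).1
  down_closed := fun σ hσ τ hτσ hτ => by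
    rw [Finset.mem_filter] at hσ ⊢
    exact ⟨K.down_closed σ hσ.1 τ hτσ hτ, (Finset.card_le_card hτσ).trans hσ.2⟩

/-- The subcomplex obtained by deleting the vertex `v`. -/
def deleteVertex (K : SC V) (v : V) : SC V where
  simplices := K.simplices.filter fun σ => v ∉ σ
  nonempty_mem := fun σ hσ => K.nonempty_mem σ (Finset.mem_filter.mp hσ).1
  down_closed := fun σ hσ τ hτσ hτ => by
    rw [Finset.mem_filter] at hσ ⊢
    exact ⟨K.down_closed σ hσ.1 τ hτσ hτ, fun hv => hσ.2 (hτσ hv)⟩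

/-- The vertex set of `K`. -/
def verts (K : SC V) : Finset V := K.simplices.sup id

/-- `v` is a vertex of `K`. -/
def IsVertex (K : SC V) (v : V) : Prop := ({v} : Finset V) ∈ K.simplices

/-- The `n`-simplex degree of a vertex `v`. -/
def deg (K : SC V) (n : ℕ) (v : V) : ℕ :=
  (K.simplices.filter fun σ => v ∈ σ ∧ σ.card = n + 1).card

/-- Two vertices are joined by a path of edges of `K`. -/
def Reachable (K : SC V) (v w : V) : Prop :=
  Relation.ReflTransGen (fun a b => ({a, b} : Finset V) ∈ K.simplices) v w

/-- The Euler characteristic of `K`. -/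
noncomputable def euler (K : SC V) : ℤ :=
  ∑ i ∈ Finset.range (K.dimension + 1), (-1 : ℤ) ^ i * K.fnum i

end SC

end RSC
namespace RSC
namespace SC

variable {V : Type*} [DecidableEq V]

lemma simplicesDim_subset {K L : SC V} (h : L.simplices ⊆ K.simplices) (p : ℕ) :
    L.simplicesDim p ⊆ K.simplicesDim p := fun σ hσ => by
  rw [simplicesDim, Finset.mem_filter] at hσ ⊢
  exact ⟨h hσ.1, hσ.2⟩

lemma finrank_chain (K : SC V) (p : ℕ) :
    Module.finrank (ZMod 2) (Chain K p) = K.fnum p := by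
  rw [Module.finrank_pi, Fintype.card_coe, fnum]

/-- Extension by zero. -/
def extMap {K L : SC V} (h : L.simplices ⊆ K.simplices) (p : ℕ) :
    Chain L p →ₗ[ZMod 2] Chain K p where
  toFun f := fun τ => if h' : (τ : Finset V) ∈ L.simplicesDim p then f ⟨τ, h'⟩ else 0
  map_add' f g := by funext τ; by_cases h' : (τ : Finset V) ∈ L.simplicesDim p <;> simp [h']
  map_smul' c f := by funext τ; by_cases h' : (τ : Finset V) ∈ L.simplicesDim p <;> simp [h']

lemma extMap_injective {K L : SC V} (h : L.simplices ⊆ K.simplices) (p : ℕ) :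
    Function.Injective (extMap h p) := by
  intro a b hab
  funext τ
  have := congrFun hab ⟨(τ : Finset V), simplicesDim_subset h p τ.2⟩
  simpa [extMap, τ.2] using this

lemma boundary_extMap {K L : SC V} (h : L.simplices ⊆ K.simplices) (q : ℕ)
    (f : Chain L (q + 1)) :
    K.boundary q (extMap h (q + 1) f) = extMap h q (L.boundary q f) := by
  funext τ
  have key : (K.boundary q (extMap h (q+1) f)) τ
      = ∑ σ ∈ L.simplicesDim (q+1),
          (if (τ : Finset V) ⊆ σ then
            (if h' : σ ∈ L.simplicesDim (q+1) then f ⟨σ, h'⟩ else 0) else 0) := by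
    show (∑ σ : ↥(K.simplicesDim (q+1)), if (τ : Finset V) ⊆ (σ : Finset V) then
        (if h' : (σ : Finset V) ∈ L.simplicesDim (q+1) then f ⟨σ, h'⟩ else 0) else 0) = _
    rw [Finset.sum_coe_sort (K.simplicesDim (q+1))
      (fun σ => if (τ : Finset V) ⊆ σ then
        (if h' : σ ∈ L.simplicesDim (q+1) then f ⟨σ, h'⟩ else 0) else 0)]
    refine (Finset.sum_subset (simplicesDim_subset h (q+1)) ?_).symm
    intro σ _ hσ
    simp [hσ]
  rw [key]
  by_cases hτ : (τ : Finset V) ∈ L.simplicesDim q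
  · have : extMap h q (L.boundary q f) τ = (L.boundary q f) ⟨τ, hτ⟩ := by
      simp [extMap, hτ]
    rw [this]
    show _ = ∑ σ : ↥(L.simplicesDim (q+1)), if (τ : Finset V) ⊆ (σ : Finset V) then f σ else 0
    rw [Finset.univ_eq_attach, ← Finset.sum_attach (L.simplicesDim (q+1))
      (fun σ => if (τ : Finset V) ⊆ σ then
        (if h' : σ ∈ L.simplicesDim (q+1) then f ⟨σ, h'⟩ else 0) else 0)]
    refine Finset.sum_congr rfl fun σ _ => ?_
    rw [dif_pos σ.2]
  · have : extMap h q (L.boundary q f) τ = 0 := by simp [extMap, hτ]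
    rw [this]
    refine Finset.sum_eq_zero fun σ hσ => ?_
    split
    · rename_i hsub
      exfalso
      apply hτ
      simp only [simplicesDim, Finset.mem_filter] at hσ ⊢
      have hτK := τ.2
      simp only [simplicesDim, Finset.mem_filter] at hτK
      have hne : (τ : Finset V).Nonempty := by
        rw [← Finset.card_pos, hτK.2]; omega
      exact ⟨L.down_closed σ hσ.1 _ ‹_› hne, hτK.2⟩
    · rfl

lemma finrank_ker_le {K L : SC V} (h : L.simplices ⊆ K.simplices) (q : ℕ) :
    Module.finrank (ZMod 2) (LinearMap.ker (L.boundary q)) ≤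
      Module.finrank (ZMod 2) (LinearMap.ker (K.boundary q)) := by
  have hmem : ∀ x : LinearMap.ker (L.boundary q),
      ((extMap h (q+1)).comp (Submodule.subtype _)) x ∈ LinearMap.ker (K.boundary q) := by
    intro x
    simp only [LinearMap.comp_apply, Submodule.subtype_apply, LinearMap.mem_ker]
    rw [boundary_extMap h q, (LinearMap.mem_ker.mp x.2 : L.boundary q x.1 = 0), map_zero]
  refine LinearMap.finrank_le_finrank_of_injective
    (f := LinearMap.codRestrict _ _ hmem) (fun a b hab => ?_)
  have := congrArg Subtype.val hab
  exact Subtype.ext (extMap_injective h (q+1)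
    (by simpa using this))

lemma finrank_range_le {K L : SC V} (h : L.simplices ⊆ K.simplices) (q : ℕ) :
    Module.finrank (ZMod 2) (LinearMap.range (L.boundary q)) ≤
      Module.finrank (ZMod 2) (LinearMap.range (K.boundary q)) := by
  have hmem : ∀ x : LinearMap.range (L.boundary q),
      ((extMap h q).comp (Submodule.subtype _)) x ∈ LinearMap.range (K.boundary q) := by
    intro x
    obtain ⟨g, hg⟩ := x.2
    refine ⟨extMap h (q+1) g, ?_⟩
    simp only [LinearMap.comp_apply, Submodule.subtype_apply]
    rw [boundary_extMap h q g, hg]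
  refine LinearMap.finrank_le_finrank_of_injective
    (f := LinearMap.codRestrict _ _ hmem) (fun a b hab => ?_)
  have := congrArg Subtype.val hab
  exact Subtype.ext (extMap_injective h q (by simpa using this))

lemma fnum_le {K L : SC V} (h : L.simplices ⊆ K.simplices) (p : ℕ) :
    L.fnum p ≤ K.fnum p := Finset.card_le_card (simplicesDim_subset h p)

end SC
end RSC

open RSC RSC.SC in
/-- for a subcomplex `L ⊆ K`,
`|β_p(K) − β_p(L)| ≤ (f_p(K) − f_p(L)) + (f_{p+1}(K) − f_{p+1}(L))`. -/
theorem abs_betti_sub_betti_le {V : Type*} [DecidableEq V] (K L : SC V)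
    (hL : L.simplices ⊆ K.simplices) (p : ℕ) :
    |(K.betti p : ℤ) - (L.betti p : ℤ)| ≤
      ((K.fnum p : ℤ) - (L.fnum p : ℤ)) + ((K.fnum (p + 1) : ℤ) - (L.fnum (p + 1) : ℤ)) := by
  have hf0 := fnum_le hL p
  have hf1 := fnum_le hL (p + 1)
  have hrp := finrank_range_le hL p
  have hkp := finrank_ker_le hL p
  have hrnK := LinearMap.finrank_range_add_finrank_ker (K.boundary p)
  have hrnL := LinearMap.finrank_range_add_finrank_ker (L.boundary p)
  rw [finrank_chain] at hrnK hrnL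
  have hbK : K.betti p = K.cycleRank p -
      Module.finrank (ZMod 2) (LinearMap.range (K.boundary p)) := rfl
  have hbL : L.betti p = L.cycleRank p -
      Module.finrank (ZMod 2) (LinearMap.range (L.boundary p)) := rfl
  rw [abs_le]
  cases p with
  | zero =>
    have hzK : K.cycleRank 0 = K.fnum 0 := finrank_chain K 0
    have hzL : L.cycleRank 0 = L.fnum 0 := finrank_chain L 0
    rw [hbK, hbL, hzK, hzL]
    omega
  | succ q =>
    have hrq := finrank_range_le hL q
    have hkq := finrank_ker_le hL q
    have hrnK' := LinearMap.finrank_range_add_finrank_ker (K.boundary q)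
    have hrnL' := LinearMap.finrank_range_add_finrank_ker (L.boundary q)
    rw [finrank_chain] at hrnK' hrnL'
    have hzK : K.cycleRank (q + 1) =
        Module.finrank (ZMod 2) (LinearMap.ker (K.boundary q)) := rfl
    have hzL : L.cycleRank (q + 1) =
        Module.finrank (ZMod 2) (LinearMap.ker (L.boundary q)) := rfl
    rw [hbK, hbL, hzK, hzL]
    omega
end

section
/- Let p ∈ ℕ (p ≥ 1). On the vertex set {1, …, p+3} define the p-simplices σ_j := {1, …, p+2} \ {j} and ρ_j := ({1, …, p+1} ∪ {p+3}) \ {j} for j ∈ {1, …, p+1}, and let L_p := {τ ⊆ {1, …, p+3} : τ ≠ ∅ and (τ ⊆ σ_j or τ ⊆ ρ_j for some j ∈ {1, …, p+1})}. Then β_p(L_p) = 1, and for every subset I ⊆ {1, …, p+3} with |I| = p+2, the induced subcomplex L_p[I] satisfies β_p(L_p[I]) = 0. -/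
namespace RSC

open SC

/-- `σ_j = {1, …, p+2} \ {j}`. -/
def sigmaSimp (p j : ℕ) : Finset ℕ := (Finset.Icc 1 (p + 2)).erase j

/-- `ρ_j = ({1, …, p+1} ∪ {p+3}) \ {j}`. -/
def rhoSimp (p j : ℕ) : Finset ℕ := ((Finset.Icc 1 (p + 1)) ∪ {p + 3}).erase j

/-- The defining property of the simplices of `L_p`: nonempty and contained in
some `σ_j` or `ρ_j` with `j ∈ {1, …, p+1}`. -/
def LpPred (p : ℕ) (τ : Finset ℕ) : Prop :=
  0 < τ.card ∧ ∃ j ∈ Finset.Icc 1 (p + 1), τ ⊆ sigmaSimp p j ∨ τ ⊆ rhoSimp p j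

instance (p : ℕ) : DecidablePred (LpPred p) := fun τ => by
  unfold LpPred; infer_instance

/-- The complex `L_p` generated by the `p`-simplices `σ_j, ρ_j`, `j ∈ {1, …, p+1}`. -/
def Lp (p : ℕ) : SC ℕ where
  simplices := (Finset.Icc 1 (p + 3)).powerset.filter (LpPred p)
  nonempty_mem := fun τ hτ =>
    Finset.card_pos.mp ((Finset.mem_filter.mp hτ).2 : LpPred p τ).1
  down_closed := fun τ hτ τ' hτ' hne => by
    rw [Finset.mem_filter, Finset.mem_powerset] at hτ ⊢
    obtain ⟨hsub, -, j, hj, hcase⟩ := hτ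
    exact ⟨hτ'.trans hsub, Finset.card_pos.mpr hne, j, hj,
      hcase.imp hτ'.trans hτ'.trans⟩

end RSC

/-! `L_p` is the suspension, with apexes `p+2` and `p+3`, of the boundary of the simplex on
`{1, …, p+1}`: its facets are the complements of the pairs `(j, c)` with `j ≤ p+1 < c`, and the
facets containing a `(p-1)`-face `τ` are those indexed by the pairs inside the three-element
complement of `τ`. There are always exactly two such pairs, so the sum of all facets is a cycle,
and passing between pairs that share an element shows that every `p`-cycle is constant on the
facets. As `L_p` has no `(p+1)`-simplices, `β_p(L_p) = 1`. A `p`-cycle of `L_p[I]` extends by zero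
to a `p`-cycle of `L_p`, which is constant and vanishes on a facet through a vertex outside `I`. -/

namespace RSC.SC

open Finset

variable {V : Type*} [DecidableEq V] (K : SC V)

def cofaces (n : ℕ) (τ : Finset V) : Finset (Finset V) :=
  (K.simplicesDim n).filter (τ ⊆ ·)

def coeff {n : ℕ} (f : K.Chain n) (σ : Finset V) : ZMod 2 :=
  if h : σ ∈ K.simplicesDim n then f ⟨σ, h⟩ else 0

variable {K}

lemma coeff_coe {n : ℕ} (f : K.Chain n) (σ : K.simplicesDim n) : K.coeff f σ = f σ :=
  dif_pos σ.2

lemma coeff_of_notMem {n : ℕ} (f : K.Chain n) {σ : Finset V} (h : σ ∉ K.simplicesDim n) :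
    K.coeff f σ = 0 :=
  dif_neg h

lemma boundary_apply {q : ℕ} (f : K.Chain (q + 1)) (τ : K.simplicesDim q) :
    K.boundary q f τ = ∑ σ ∈ K.cofaces (q + 1) τ, K.coeff f σ := by
  rw [cofaces, sum_filter, ← sum_attach]
  exact sum_congr rfl fun σ _ => by rw [coeff_coe]

lemma coeff_eq_of_cofaces_eq_pair {q : ℕ} {f : K.Chain (q + 1)} (hf : K.boundary q f = 0)
    {τ : Finset V} (hτ : τ ∈ K.simplicesDim q) {a b : Finset V} (hab : a ≠ b)
    (h : K.cofaces (q + 1) τ = {a, b}) : K.coeff f a = K.coeff f b := by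
  have := congrFun hf ⟨τ, hτ⟩
  rwa [boundary_apply, h, sum_pair hab, Pi.zero_apply, CharTwo.add_eq_zero] at this

lemma boundary_one_eq_zero_of_even_card_cofaces {q : ℕ}
    (h : ∀ τ ∈ K.simplicesDim q, Even (K.cofaces (q + 1) τ).card) :
    K.boundary q (fun _ => 1) = 0 := by
  funext τ
  have hone : ∀ σ ∈ K.cofaces (q + 1) τ, K.coeff (fun _ => 1) σ = 1 := fun σ hσ =>
    coeff_coe (K := K) (fun _ => 1) ⟨σ, (mem_filter.1 hσ).1⟩
  rw [boundary_apply, sum_congr rfl hone, sum_const, nsmul_one, Pi.zero_apply,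
    ZMod.natCast_eq_zero_iff_even]
  exact h τ τ.2

lemma betti_succ_of_simplicesDim_eq_empty {q : ℕ} (h : K.simplicesDim (q + 2) = ∅) :
    K.betti (q + 1) = Module.finrank (ZMod 2) (LinearMap.ker (K.boundary q)) := by
  have : IsEmpty (K.simplicesDim (q + 2)) := by rw [h]; infer_instance
  have hzero : K.boundary (q + 1) = 0 := LinearMap.ext fun f => funext fun σ => sum_of_isEmpty _
  rw [betti, hzero, LinearMap.range_zero, finrank_bot, Nat.sub_zero]
  rfl

lemma mem_simplicesDim_induced {I : Finset V} {n : ℕ} {σ : Finset V} :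
    σ ∈ (K.induced I).simplicesDim n ↔ σ ∈ K.simplicesDim n ∧ σ ⊆ I := by
  simp only [simplicesDim, induced, mem_filter]
  tauto

lemma exists_cycle_coeff_eq_of_induced {I : Finset V} {q : ℕ} {f : (K.induced I).Chain (q + 1)}
    (hf : (K.induced I).boundary q f = 0) :
    ∃ g : K.Chain (q + 1), K.boundary q g = 0 ∧
      ∀ σ, K.coeff g σ = (K.induced I).coeff f σ := by
  set g : K.Chain (q + 1) := fun σ => (K.induced I).coeff f σ
  have hg : ∀ σ, K.coeff g σ = (K.induced I).coeff f σ := fun σ => by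
    by_cases hσ : σ ∈ K.simplicesDim (q + 1)
    · exact coeff_coe g ⟨σ, hσ⟩
    · rw [coeff_of_notMem _ hσ, coeff_of_notMem _ fun h => hσ (mem_simplicesDim_induced.1 h).1]
  refine ⟨g, funext fun τ => ?_, hg⟩
  have hsub : (K.induced I).cofaces (q + 1) τ ⊆ K.cofaces (q + 1) τ := fun σ hσ => by
    simp only [cofaces, mem_filter, mem_simplicesDim_induced] at hσ ⊢
    exact ⟨hσ.1.1, hσ.2⟩
  rw [boundary_apply, sum_congr rfl fun σ _ => hg σ, ← sum_subset hsub fun σ hσ hσ' =>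
    coeff_of_notMem _ fun h => hσ' (mem_filter.2 ⟨h, (mem_filter.1 hσ).2⟩)]
  by_cases hτ : (τ : Finset V) ⊆ I
  · have := congrFun hf ⟨τ, mem_simplicesDim_induced.2 ⟨τ.2, hτ⟩⟩
    rwa [boundary_apply] at this
  · refine sum_eq_zero fun σ hσ => absurd ?_ hτ
    simp only [cofaces, mem_filter, mem_simplicesDim_induced] at hσ
    exact hσ.2.trans hσ.1.2

lemma simplicesDim_induced_eq_empty {I : Finset V} {n : ℕ} (h : K.simplicesDim n = ∅) :
    (K.induced I).simplicesDim n = ∅ :=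
  eq_empty_of_forall_notMem fun σ hσ => by
    simpa [h] using (mem_simplicesDim_induced.1 hσ).1

end RSC.SC

namespace RSC

open SC Finset

def ground (p : ℕ) : Finset ℕ := Icc 1 (p + 3)

def edges (p : ℕ) : Finset (ℕ × ℕ) := Icc 1 (p + 1) ×ˢ Icc (p + 2) (p + 3)

def facet (p : ℕ) (e : ℕ × ℕ) : Finset ℕ := ground p \ {e.1, e.2}

variable {p : ℕ}

@[simp]
lemma mem_ground {x : ℕ} : x ∈ ground p ↔ 1 ≤ x ∧ x ≤ p + 3 := mem_Icc

@[simp]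
lemma mem_edges {e : ℕ × ℕ} :
    e ∈ edges p ↔ (1 ≤ e.1 ∧ e.1 ≤ p + 1) ∧ p + 2 ≤ e.2 ∧ e.2 ≤ p + 3 := by
  simp [edges]

@[simp]
lemma mem_facet {e : ℕ × ℕ} {x : ℕ} :
    x ∈ facet p e ↔ x ∈ ground p ∧ x ≠ e.1 ∧ x ≠ e.2 := by
  simp [facet]

lemma sigmaSimp_eq_facet (j : ℕ) : sigmaSimp p j = facet p (j, p + 3) := by
  ext x; simp [sigmaSimp]; omega

lemma rhoSimp_eq_facet (j : ℕ) : rhoSimp p j = facet p (j, p + 2) := by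
  ext x; simp [rhoSimp]; omega

lemma mem_Lp_simplices {τ : Finset ℕ} :
    τ ∈ (Lp p).simplices ↔ τ.Nonempty ∧ ∃ e ∈ edges p, τ ⊆ facet p e := by
  simp only [Lp, LpPred, mem_filter, mem_powerset, card_pos, sigmaSimp_eq_facet,
    rhoSimp_eq_facet]
  constructor
  · rintro ⟨-, hne, j, hj, h | h⟩
    exacts [⟨hne, (j, p + 3), by simp_all, h⟩, ⟨hne, (j, p + 2), by simp_all, h⟩]
  · rintro ⟨hne, ⟨j, c⟩, he, h⟩
    refine ⟨h.trans sdiff_subset, hne, j, by simp_all, ?_⟩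
    obtain rfl | rfl : c = p + 3 ∨ c = p + 2 := by simp at he; omega
    exacts [Or.inl h, Or.inr h]

lemma card_facet {e : ℕ × ℕ} (he : e ∈ edges p) : (facet p e).card = p + 1 := by
  rw [mem_edges] at he
  rw [facet, card_sdiff_of_subset (by intro x; simp; omega), card_pair (by omega), ground,
    Nat.card_Icc]
  omega

lemma facet_injOn : Set.InjOn (facet p) (edges p) := by
  rintro ⟨j, c⟩ he ⟨j', c'⟩ he' h
  have h1 : j ∉ facet p (j', c') := h ▸ by simp
  have h2 : c ∉ facet p (j', c') := h ▸ by simp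
  simp only [mem_coe, mem_edges] at he he'
  simp only [mem_facet, mem_ground, not_and, not_not] at h1 h2
  ext <;> simp <;> omega

lemma simplicesDim_Lp_self : (Lp p).simplicesDim p = (edges p).image (facet p) := by
  ext σ
  simp only [simplicesDim, mem_filter, mem_Lp_simplices, mem_image]
  constructor
  · rintro ⟨⟨-, e, he, hσ⟩, hcard⟩
    exact ⟨e, he, (eq_of_subset_of_card_le hσ (by rw [card_facet he, hcard])).symm⟩
  · rintro ⟨e, he, rfl⟩
    exact ⟨⟨card_pos.1 (by rw [card_facet he]; omega), e, he, Subset.rfl⟩, card_facet he⟩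

lemma exists_facet_eq_of_mem_simplicesDim {σ : Finset ℕ}
    (hσ : σ ∈ (Lp p).simplicesDim p) : ∃ e ∈ edges p, facet p e = σ := by
  rwa [simplicesDim_Lp_self, mem_image] at hσ

lemma simplicesDim_Lp_succ : (Lp p).simplicesDim (p + 1) = ∅ := by
  refine eq_empty_of_forall_notMem fun σ hσ => ?_
  simp only [simplicesDim, mem_filter, mem_Lp_simplices] at hσ
  obtain ⟨⟨-, e, he, hσe⟩, hcard⟩ := hσ
  have := card_le_card hσe
  rw [hcard, card_facet he] at this
  omega

lemma sdiff_subset_facet_iff {e : ℕ × ℕ} (he : e ∈ edges p) {T : Finset ℕ} :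
    ground p \ T ⊆ facet p e ↔ e.1 ∈ T ∧ e.2 ∈ T := by
  rw [mem_edges] at he
  simp only [subset_iff, mem_sdiff, mem_facet, mem_ground]
  constructor
  · intro h
    constructor <;> by_contra hT
    · exact (h ⟨by omega, hT⟩).2.1 rfl
    · exact (h ⟨by omega, hT⟩).2.2 rfl
  · rintro ⟨h1, h2⟩ x ⟨hx, hxT⟩
    exact ⟨hx, fun h => hxT (h ▸ h1), fun h => hxT (h ▸ h2)⟩

lemma cofaces_sdiff_Lp (T : Finset ℕ) :
    (Lp p).cofaces p (ground p \ T) =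
      ((edges p).filter fun e => e.1 ∈ T ∧ e.2 ∈ T).image (facet p) := by
  ext σ
  simp only [cofaces, simplicesDim_Lp_self, mem_filter, mem_image]
  constructor
  · rintro ⟨⟨e, he, rfl⟩, h⟩
    exact ⟨e, ⟨he, (sdiff_subset_facet_iff he).1 h⟩, rfl⟩
  · rintro ⟨e, ⟨he, h⟩, rfl⟩
    exact ⟨⟨e, he, rfl⟩, (sdiff_subset_facet_iff he).2 h⟩

variable {q : ℕ}

lemma sdiff_mem_simplicesDim_Lp {T : Finset ℕ} (hT : T ⊆ ground (q + 1)) (hcard : T.card = 3)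
    {e : ℕ × ℕ} (he : e ∈ edges (q + 1)) (heT : e.1 ∈ T ∧ e.2 ∈ T) :
    ground (q + 1) \ T ∈ (Lp (q + 1)).simplicesDim q := by
  have hcard' : (ground (q + 1) \ T).card = q + 1 := by
    rw [card_sdiff_of_subset hT, hcard, ground, Nat.card_Icc]
    omega
  refine mem_filter.2 ⟨mem_Lp_simplices.2 ⟨card_pos.1 (by omega), e, he, ?_⟩, hcard'⟩
  exact (sdiff_subset_facet_iff he).2 heT

lemma coeff_facet_eq_of_filter_edges_eq_pair {f : (Lp (q + 1)).Chain (q + 1)}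
    (hf : (Lp (q + 1)).boundary q f = 0) {T : Finset ℕ} (hT : T ⊆ ground (q + 1))
    (hcard : T.card = 3) {e e' : ℕ × ℕ} (he : e ∈ edges (q + 1)) (he' : e' ∈ edges (q + 1))
    (hne : e ≠ e') (h : ((edges (q + 1)).filter fun x => x.1 ∈ T ∧ x.2 ∈ T) = {e, e'}) :
    (Lp (q + 1)).coeff f (facet (q + 1) e) = (Lp (q + 1)).coeff f (facet (q + 1) e') := by
  have heT : e ∈ (edges (q + 1)).filter fun x => x.1 ∈ T ∧ x.2 ∈ T :=
    h ▸ mem_insert_self e {e'}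
  replace heT := (mem_filter.1 heT).2
  refine coeff_eq_of_cofaces_eq_pair hf (sdiff_mem_simplicesDim_Lp hT hcard he heT)
    (fun h' => hne (facet_injOn he he' h')) ?_
  rw [cofaces_sdiff_Lp, h, image_insert, image_singleton]

lemma even_card_cofaces_Lp {τ : Finset ℕ} (hτ : τ ∈ (Lp (q + 1)).simplicesDim q) :
    Even ((Lp (q + 1)).cofaces (q + 1) τ).card := by
  obtain ⟨hτL, hτcard⟩ := mem_filter.1 hτ
  obtain ⟨-, e, he, hτe⟩ := mem_Lp_simplices.1 hτL
  have hτU : τ ⊆ ground (q + 1) := hτe.trans sdiff_subset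
  set T := ground (q + 1) \ τ
  have hcard : T.card = 3 := by
    rw [card_sdiff_of_subset hτU, hτcard, ground, Nat.card_Icc]
    omega
  have hprod : ((edges (q + 1)).filter fun x => x.1 ∈ T ∧ x.2 ∈ T) =
      T.filter (· ≤ q + 2) ×ˢ T.filter (¬ · ≤ q + 2) := by
    ext ⟨a, b⟩
    simp only [mem_filter, mem_product, mem_edges, T, mem_sdiff, mem_ground]
    grind
  have hsplit := card_filter_add_card_filter_not (s := T) (· ≤ q + 2)
  simp only [mem_edges] at he
  have hbase : 1 ≤ (T.filter (· ≤ q + 2)).card := card_pos.2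
    ⟨e.1, mem_filter.2 ⟨mem_sdiff.2 ⟨by simp; omega, fun h => by simpa using hτe h⟩, he.1.2⟩⟩
  have hapex : 1 ≤ (T.filter (¬ · ≤ q + 2)).card := card_pos.2
    ⟨e.2, mem_filter.2 ⟨mem_sdiff.2 ⟨by simp; omega, fun h => by simpa using hτe h⟩, by omega⟩⟩
  rw [← Finset.sdiff_sdiff_eq_self hτU, cofaces_sdiff_Lp, card_image_of_injOn
    (facet_injOn.mono (coe_subset.2 (filter_subset _ _))), hprod, card_product]
  generalize (T.filter (· ≤ q + 2)).card = a at *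
  generalize (T.filter (¬ · ≤ q + 2)).card = b at *
  obtain ⟨rfl, rfl⟩ | ⟨rfl, rfl⟩ : a = 1 ∧ b = 2 ∨ a = 2 ∧ b = 1 := by omega
  all_goals decide

lemma coeff_facet_eq_coeff_facet_one {f : (Lp (q + 1)).Chain (q + 1)}
    (hf : (Lp (q + 1)).boundary q f = 0) {e : ℕ × ℕ} (he : e ∈ edges (q + 1)) :
    (Lp (q + 1)).coeff f (facet (q + 1) e) = (Lp (q + 1)).coeff f (facet (q + 1) (1, q + 4)) := by
  obtain ⟨j, c⟩ := e
  simp only [mem_edges] at he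
  have hswap : (Lp (q + 1)).coeff f (facet (q + 1) (j, c)) =
      (Lp (q + 1)).coeff f (facet (q + 1) (j, q + 4)) := by
    obtain rfl | rfl : c = q + 3 ∨ c = q + 4 := by omega
    · refine coeff_facet_eq_of_filter_edges_eq_pair hf (T := {j, q + 3, q + 4})
        (by intro x; simp; omega) (card_eq_three.2 ⟨_, _, _, by omega, by omega, by omega, rfl⟩)
        (by simp; omega) (by simp; omega) (by simp) ?_
      ext ⟨a, b⟩
      simp
      omega
    · rfl
  rw [hswap]
  rcases eq_or_ne j 1 with rfl | hj
  · rfl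
  refine coeff_facet_eq_of_filter_edges_eq_pair hf (T := {j, 1, q + 4})
    (by intro x; simp; omega) (card_eq_three.2 ⟨_, _, _, hj, by omega, by omega, rfl⟩)
    (by simp; omega) (by simp) (by simp [hj]) ?_
  ext ⟨a, b⟩
  simp
  omega

lemma facet_one_mem_simplicesDim :
    facet (q + 1) (1, q + 4) ∈ (Lp (q + 1)).simplicesDim (q + 1) := by
  rw [simplicesDim_Lp_self]
  exact mem_image_of_mem _ (by simp)

lemma ker_boundary_Lp :
    LinearMap.ker ((Lp (q + 1)).boundary q) = Submodule.span (ZMod 2) {fun _ => 1} := by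
  refine le_antisymm (fun f hf => ?_) ?_
  · refine Submodule.mem_span_singleton.2 ⟨(Lp (q + 1)).coeff f (facet (q + 1) (1, q + 4)), ?_⟩
    funext σ
    obtain ⟨e, he, hσ⟩ := exists_facet_eq_of_mem_simplicesDim σ.2
    rw [Pi.smul_apply, smul_eq_mul, mul_one, ← coeff_facet_eq_coeff_facet_one hf he, hσ,
      coeff_coe]
  · rw [Submodule.span_le, Set.singleton_subset_iff, SetLike.mem_coe, LinearMap.mem_ker]
    exact boundary_one_eq_zero_of_even_card_cofaces fun τ hτ => even_card_cofaces_Lp hτ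

lemma exists_mem_facet {v : ℕ} (hv : v ∈ ground (q + 1)) :
    ∃ e ∈ edges (q + 1), v ∈ facet (q + 1) e := by
  refine ⟨(if v = 1 then 2 else 1, if v = q + 4 then q + 3 else q + 4), ?_, ?_⟩ <;>
    simp only [mem_ground, mem_edges, mem_facet] at hv ⊢ <;> split_ifs <;> omega

lemma ker_boundary_induced_Lp_eq_bot {I : Finset ℕ} {v : ℕ} (hv : v ∈ ground (q + 1))
    (hvI : v ∉ I) : LinearMap.ker (((Lp (q + 1)).induced I).boundary q) = ⊥ := by
  refine (Submodule.eq_bot_iff _).2 fun f hf => funext fun σ => ?_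
  obtain ⟨g, hg, hgf⟩ := exists_cycle_coeff_eq_of_induced hf
  obtain ⟨e, he, hve⟩ := exists_mem_facet hv
  obtain ⟨e', he', hσe'⟩ :=
    exists_facet_eq_of_mem_simplicesDim (mem_simplicesDim_induced.1 σ.2).1
  rw [Pi.zero_apply, ← coeff_coe f σ, ← hgf, ← hσe', coeff_facet_eq_coeff_facet_one hg he',
    ← coeff_facet_eq_coeff_facet_one hg he, hgf, coeff_of_notMem _ fun h => hvI
    ((mem_simplicesDim_induced.1 h).2 hve)]

end RSC

open RSC RSC.SC in
/-- `β_p(L_p) = 1` and every induced subcomplex of `L_p` on `p+2`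
vertices has vanishing `p`-th Betti number. -/
theorem betti_Lp (p : ℕ) (hp : 1 ≤ p) :
    (Lp p).betti p = 1 ∧
      ∀ I ⊆ Finset.Icc 1 (p + 3), I.card = p + 2 → ((Lp p).induced I).betti p = 0 := by
  obtain ⟨q, rfl⟩ := Nat.exists_eq_add_of_le' hp
  refine ⟨?_, fun I _ hcard => ?_⟩
  · rw [betti_succ_of_simplicesDim_eq_empty simplicesDim_Lp_succ, ker_boundary_Lp,
      finrank_span_singleton fun h => one_ne_zero (congrFun h ⟨_, facet_one_mem_simplicesDim⟩)]
  · obtain ⟨v, hv, hvI⟩ := Finset.exists_mem_notMem_of_card_lt_card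
      (s := I) (t := ground (q + 1)) (by rw [ground, Nat.card_Icc]; omega)
    rw [betti_succ_of_simplicesDim_eq_empty (simplicesDim_induced_eq_empty simplicesDim_Lp_succ),
      ker_boundary_induced_Lp_eq_bot hv hvI,
      finrank_bot]
end

section
/- Let K be a finite simplicial complex with vertex set V, let v ∈ V be a vertex of K, and let K[V \ {v}] := {σ ∈ K : v ∉ σ} be the induced subcomplex on the remaining vertices. Then for every p ∈ ℕ₀: |β_p(K) − β_p(K[V \ {v}])| ≤ deg_p(v, K) + deg_{p+1}(v, K). -/
section Aux

open RSC RSC.SC Module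

namespace RSCAux

variable {V : Type*} [DecidableEq V]

lemma mem_sdim {K : SC V} {q : ℕ} {σ : Finset V} :
    σ ∈ K.simplicesDim q ↔ σ ∈ K.simplices ∧ σ.card = q + 1 := by
  simp [SC.simplicesDim]

lemma mem_sdim_del {K : SC V} {v : V} {q : ℕ} {σ : Finset V} :
    σ ∈ (K.deleteVertex v).simplicesDim q ↔ σ ∈ K.simplicesDim q ∧ v ∉ σ := by
  simp only [SC.simplicesDim, SC.deleteVertex, Finset.mem_filter]
  tauto

lemma sdim_del_subset (K : SC V) (v : V) (q : ℕ) :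
    (K.deleteVertex v).simplicesDim q ⊆ K.simplicesDim q :=
  fun _ h => (mem_sdim_del.mp h).1

/-- Extension-by-zero inclusion of chain groups. -/
def incl (K : SC V) (v : V) (q : ℕ) :
    Chain (K.deleteVertex v) q →ₗ[ZMod 2] Chain K q where
  toFun f := fun σ =>
    if h : (σ : Finset V) ∈ (K.deleteVertex v).simplicesDim q then f ⟨σ, h⟩ else 0
  map_add' f g := by
    funext σ
    by_cases h : (σ : Finset V) ∈ (K.deleteVertex v).simplicesDim q <;> simp [h]
  map_smul' c f := by
    funext σ
    by_cases h : (σ : Finset V) ∈ (K.deleteVertex v).simplicesDim q <;> simp [h]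

lemma incl_injective (K : SC V) (v : V) (q : ℕ) : Function.Injective (incl K v q) := by
  intro f g hfg
  funext σ
  have h := congrFun hfg ⟨(σ : Finset V), sdim_del_subset K v q σ.2⟩
  simpa [incl, dif_pos σ.2] using h

lemma sum_dite_mem {α M : Type*} [DecidableEq α] [AddCommMonoid M] {S T : Finset α} (hTS : T ⊆ S)
    (g : (a : α) → a ∈ T → M) :
    (∑ σ : ↥S, if h : (σ : α) ∈ T then g σ h else 0) = ∑ σ : ↥T, g σ σ.2 := by
  rw [Finset.sum_coe_sort S (fun a => if h : a ∈ T then g a h else 0),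
    ← Finset.sum_subset hTS (fun a _ ha => dif_neg ha),
    ← Finset.sum_coe_sort T (fun a => if h : a ∈ T then g a h else 0)]
  exact Finset.sum_congr rfl fun σ _ => dif_pos σ.2

lemma boundary_comp_incl (K : SC V) (v : V) (q : ℕ) :
    (K.boundary q).comp (incl K v (q + 1)) =
      (incl K v q).comp ((K.deleteVertex v).boundary q) := by
  apply LinearMap.ext
  intro f
  funext τ
  show (∑ σ : ↥(K.simplicesDim (q + 1)),
      if (τ : Finset V) ⊆ (σ : Finset V) then
        (if h : (σ : Finset V) ∈ (K.deleteVertex v).simplicesDim (q + 1) then f ⟨σ, h⟩ else 0)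
      else 0)
    = if h : (τ : Finset V) ∈ (K.deleteVertex v).simplicesDim q then
        ((K.deleteVertex v).boundary q f) ⟨τ, h⟩ else 0
  by_cases hτ : (τ : Finset V) ∈ (K.deleteVertex v).simplicesDim q
  · rw [dif_pos hτ]
    have step : ∀ σ : ↥(K.simplicesDim (q + 1)),
        (if (τ : Finset V) ⊆ (σ : Finset V) then
          (if h : (σ : Finset V) ∈ (K.deleteVertex v).simplicesDim (q + 1) then f ⟨σ, h⟩ else 0)
        else 0)
        = if h : (σ : Finset V) ∈ (K.deleteVertex v).simplicesDim (q + 1) then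
            (if (τ : Finset V) ⊆ (σ : Finset V) then f ⟨σ, h⟩ else 0) else 0 := by
      intro σ
      by_cases h1 : (τ : Finset V) ⊆ (σ : Finset V) <;>
        by_cases h2 : (σ : Finset V) ∈ (K.deleteVertex v).simplicesDim (q + 1) <;>
        simp [h1, h2]
    rw [Finset.sum_congr rfl fun σ _ => step σ,
      sum_dite_mem (sdim_del_subset K v (q + 1))
        (fun a ha => if (τ : Finset V) ⊆ a then f ⟨a, ha⟩ else 0)]
    rfl
  · rw [dif_neg hτ]
    apply Finset.sum_eq_zero
    intro σ _
    by_cases h1 : (τ : Finset V) ⊆ (σ : Finset V)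
    · rw [if_pos h1, dif_neg]
      intro h2
      have hvτ : v ∈ (τ : Finset V) := by
        by_contra hvτ
        exact hτ (mem_sdim_del.mpr ⟨τ.2, hvτ⟩)
      exact (mem_sdim_del.mp h2).2 (h1 hvτ)
    · exact if_neg h1

lemma count_between (K : SC V) {q : ℕ} {τ σ : Finset V}
    (hτ : τ ∈ K.simplicesDim q) (hσ : σ ∈ K.simplicesDim (q + 2)) (hts : τ ⊆ σ) :
    ((K.simplicesDim (q + 1)).filter fun ρ => τ ⊆ ρ ∧ ρ ⊆ σ).card = 2 := by
  obtain ⟨hτK, hτc⟩ := mem_sdim.mp hτ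
  obtain ⟨hσK, hσc⟩ := mem_sdim.mp hσ
  have hset : ((K.simplicesDim (q + 1)).filter fun ρ => τ ⊆ ρ ∧ ρ ⊆ σ)
      = (σ \ τ).image (fun x => insert x τ) := by
    ext ρ
    simp only [Finset.mem_filter, Finset.mem_image, Finset.mem_sdiff, mem_sdim]
    constructor
    · rintro ⟨⟨hρK, hρc⟩, hτρ, hρσ⟩
      have h1 : (ρ \ τ).card = 1 := by
        rw [Finset.card_sdiff_of_subset hτρ, hρc, hτc]
        omega
      obtain ⟨x, hx⟩ := Finset.card_eq_one.mp h1
      have hxρ : x ∈ ρ \ τ := by rw [hx]; exact Finset.mem_singleton_self x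
      rw [Finset.mem_sdiff] at hxρ
      refine ⟨x, ⟨hρσ hxρ.1, hxρ.2⟩, ?_⟩
      apply Finset.eq_of_subset_of_card_le (Finset.insert_subset hxρ.1 hτρ)
      rw [Finset.card_insert_of_notMem hxρ.2, hτc, hρc]
    · rintro ⟨x, ⟨hxσ, hxτ⟩, rfl⟩
      have hins : insert x τ ⊆ σ := Finset.insert_subset hxσ hts
      have hc : (insert x τ).card = q + 1 + 1 := by
        rw [Finset.card_insert_of_notMem hxτ, hτc]
      exact ⟨⟨K.down_closed σ hσK _ hins (Finset.insert_nonempty x τ), hc⟩,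
        Finset.subset_insert x τ, hins⟩
  have hinj : Set.InjOn (fun x => insert x τ) ↑(σ \ τ) := by
    intro x hx y hy hxy
    rw [Finset.mem_coe, Finset.mem_sdiff] at hx hy
    have hxy' : insert x τ = insert y τ := hxy
    have hx' : x ∈ insert y τ := by rw [← hxy']; exact Finset.mem_insert_self x τ
    rcases Finset.mem_insert.mp hx' with h | h
    · exact h
    · exact absurd h hx.2
  rw [hset, Finset.card_image_of_injOn hinj, Finset.card_sdiff_of_subset hts, hσc, hτc]
  omega

lemma boundary_boundary (K : SC V) (q : ℕ) :
    (K.boundary q).comp (K.boundary (q + 1)) = 0 := by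
  apply LinearMap.ext
  intro f
  funext τ
  show (∑ ρ : ↥(K.simplicesDim (q + 1)),
      if (τ : Finset V) ⊆ (ρ : Finset V) then
        (∑ σ : ↥(K.simplicesDim (q + 1 + 1)),
          if (ρ : Finset V) ⊆ (σ : Finset V) then f σ else 0)
      else 0) = 0
  have step : ∀ ρ : ↥(K.simplicesDim (q + 1)),
      (if (τ : Finset V) ⊆ (ρ : Finset V) then
        (∑ σ : ↥(K.simplicesDim (q + 1 + 1)),
          if (ρ : Finset V) ⊆ (σ : Finset V) then f σ else 0)
      else 0)
      = ∑ σ : ↥(K.simplicesDim (q + 1 + 1)),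
          if (τ : Finset V) ⊆ (ρ : Finset V) ∧ (ρ : Finset V) ⊆ (σ : Finset V) then f σ
          else 0 := by
    intro ρ
    by_cases h : (τ : Finset V) ⊆ (ρ : Finset V) <;> simp [h]
  rw [Finset.sum_congr rfl fun ρ _ => step ρ, Finset.sum_comm]
  apply Finset.sum_eq_zero
  intro σ _
  have hcount : (∑ ρ : ↥(K.simplicesDim (q + 1)),
      if (τ : Finset V) ⊆ (ρ : Finset V) ∧ (ρ : Finset V) ⊆ (σ : Finset V) then f σ else 0)
      = ((K.simplicesDim (q + 1)).filter
          fun ρ => (τ : Finset V) ⊆ ρ ∧ ρ ⊆ (σ : Finset V)).card • f σ := by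
    rw [Finset.sum_coe_sort _
        (fun ρ => if (τ : Finset V) ⊆ ρ ∧ ρ ⊆ (σ : Finset V) then f σ else 0),
      ← Finset.sum_filter, Finset.sum_const]
  rw [hcount]
  by_cases hts : (τ : Finset V) ⊆ (σ : Finset V)
  · rw [count_between K τ.2 σ.2 hts]
    simp [two_smul, CharTwo.add_self_eq_zero]
  · have hempty : ((K.simplicesDim (q + 1)).filter
        fun ρ => (τ : Finset V) ⊆ ρ ∧ ρ ⊆ (σ : Finset V)) = ∅ := by
      rw [Finset.filter_eq_empty_iff]
      exact fun ρ _ h => hts (h.1.trans h.2)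
    rw [hempty]
    simp

lemma range_le_ker (K : SC V) (q : ℕ) :
    LinearMap.range (K.boundary (q + 1)) ≤ LinearMap.ker (K.boundary q) :=
  LinearMap.range_le_ker_iff.mpr (boundary_boundary K q)

lemma finrank_range_le_ker (K : SC V) (q : ℕ) :
    finrank (ZMod 2) (LinearMap.range (K.boundary (q + 1))) ≤
      finrank (ZMod 2) (LinearMap.ker (K.boundary q)) :=
  Submodule.finrank_mono (range_le_ker K q)

lemma finrank_range_del_le (K : SC V) (v : V) (q : ℕ) :
    finrank (ZMod 2) (LinearMap.range ((K.deleteVertex v).boundary q)) ≤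
      finrank (ZMod 2) (LinearMap.range (K.boundary q)) := by
  have h1 : finrank (ZMod 2) (LinearMap.range ((K.deleteVertex v).boundary q))
      = finrank (ZMod 2)
        (Submodule.map (incl K v q) (LinearMap.range ((K.deleteVertex v).boundary q))) :=
    (Submodule.equivMapOfInjective _ (incl_injective K v q) _).finrank_eq
  rw [h1, ← LinearMap.range_comp, ← boundary_comp_incl]
  exact Submodule.finrank_mono (LinearMap.range_comp_le_range _ _)

lemma finrank_ker_del_le (K : SC V) (v : V) (q : ℕ) :
    finrank (ZMod 2) (LinearMap.ker ((K.deleteVertex v).boundary q)) ≤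
      finrank (ZMod 2) (LinearMap.ker (K.boundary q)) := by
  have hmap : Submodule.map (incl K v (q + 1)) (LinearMap.ker ((K.deleteVertex v).boundary q))
      ≤ LinearMap.ker (K.boundary q) := by
    rintro _ ⟨f, hf, rfl⟩
    have hf' : (K.deleteVertex v).boundary q f = 0 := hf
    have h := LinearMap.congr_fun (boundary_comp_incl K v q) f
    simp only [LinearMap.comp_apply] at h
    exact LinearMap.mem_ker.mpr (by rw [h, hf', map_zero])
  have h1 : finrank (ZMod 2) (LinearMap.ker ((K.deleteVertex v).boundary q))
      = finrank (ZMod 2)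
        (Submodule.map (incl K v (q + 1)) (LinearMap.ker ((K.deleteVertex v).boundary q))) :=
    (Submodule.equivMapOfInjective _ (incl_injective K v (q + 1)) _).finrank_eq
  rw [h1]
  exact Submodule.finrank_mono hmap

lemma fnum_eq (K : SC V) (v : V) (q : ℕ) :
    K.fnum q = (K.deleteVertex v).fnum q + K.deg q v := by
  classical
  have h := Finset.card_filter_add_card_filter_not
    (s := K.simplicesDim q) (p := fun σ => v ∈ σ)
  have e1 : ((K.simplicesDim q).filter fun σ => v ∈ σ).card = K.deg q v := by
    unfold SC.deg SC.simplicesDim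
    rw [Finset.filter_filter]
    congr 1
    ext σ
    simp only [Finset.mem_filter]
    tauto
  have e2 : ((K.simplicesDim q).filter fun σ => ¬ v ∈ σ).card = (K.deleteVertex v).fnum q := by
    unfold SC.fnum SC.simplicesDim SC.deleteVertex
    rw [Finset.filter_filter, Finset.filter_filter]
    congr 1
    ext σ
    simp only [Finset.mem_filter]
    tauto
  unfold SC.fnum at e2 ⊢
  omega

lemma finrank_chain (K : SC V) (q : ℕ) :
    finrank (ZMod 2) (Chain K q) = K.fnum q := by
  rw [Module.finrank_fintype_fun_eq_card, Fintype.card_coe]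
  rfl

end RSCAux

end Aux

open RSC RSC.SC in
/-- removing a vertex changes the `p`-th Betti number by at most
`deg_p(v,K) + deg_{p+1}(v,K)`. -/
theorem abs_betti_deleteVertex_le {V : Type*} [DecidableEq V] (K : SC V) (v : V)
    (hv : K.IsVertex v) (p : ℕ) :
    |(K.betti p : ℤ) - ((K.deleteVertex v).betti p : ℤ)| ≤
      (K.deg p v : ℤ) + (K.deg (p + 1) v : ℤ) := by
  classical
  rw [abs_sub_le_iff]
  cases p with
  | zero =>
    have hfc0 : Module.finrank (ZMod 2) (Chain K 0) = K.fnum 0 := RSCAux.finrank_chain K 0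
    have hfc0' : Module.finrank (ZMod 2) (Chain (K.deleteVertex v) 0)
        = (K.deleteVertex v).fnum 0 := RSCAux.finrank_chain (K.deleteVertex v) 0
    have hfn0 := RSCAux.fnum_eq K v 0
    have hfn1 := RSCAux.fnum_eq K v (0 + 1)
    have eK : K.betti 0 = Module.finrank (ZMod 2) (Chain K 0)
        - Module.finrank (ZMod 2) (LinearMap.range (K.boundary 0)) := rfl
    have eL : (K.deleteVertex v).betti 0
        = Module.finrank (ZMod 2) (Chain (K.deleteVertex v) 0)
        - Module.finrank (ZMod 2) (LinearMap.range ((K.deleteVertex v).boundary 0)) := rfl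
    have rnK := LinearMap.finrank_range_add_finrank_ker (K.boundary 0)
    have rnL := LinearMap.finrank_range_add_finrank_ker ((K.deleteVertex v).boundary 0)
    rw [RSCAux.finrank_chain K (0 + 1)] at rnK
    rw [RSCAux.finrank_chain (K.deleteVertex v) (0 + 1)] at rnL
    have hr := RSCAux.finrank_range_del_le K v 0
    have hk := RSCAux.finrank_ker_del_le K v 0
    have hbK : Module.finrank (ZMod 2) (LinearMap.range (K.boundary 0))
        ≤ Module.finrank (ZMod 2) (Chain K 0) := Submodule.finrank_le _
    have hbL : Module.finrank (ZMod 2) (LinearMap.range ((K.deleteVertex v).boundary 0))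
        ≤ Module.finrank (ZMod 2) (Chain (K.deleteVertex v) 0) := Submodule.finrank_le _
    constructor <;> omega
  | succ t =>
    have hfn0 := RSCAux.fnum_eq K v (t + 1)
    have hfn1 := RSCAux.fnum_eq K v (t + 1 + 1)
    have eK : K.betti (t + 1) = Module.finrank (ZMod 2) (LinearMap.ker (K.boundary t))
        - Module.finrank (ZMod 2) (LinearMap.range (K.boundary (t + 1))) := rfl
    have eL : (K.deleteVertex v).betti (t + 1)
        = Module.finrank (ZMod 2) (LinearMap.ker ((K.deleteVertex v).boundary t))
        - Module.finrank (ZMod 2) (LinearMap.range ((K.deleteVertex v).boundary (t + 1))) := rfl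
    have rnKt := LinearMap.finrank_range_add_finrank_ker (K.boundary t)
    have rnLt := LinearMap.finrank_range_add_finrank_ker ((K.deleteVertex v).boundary t)
    have rnKp := LinearMap.finrank_range_add_finrank_ker (K.boundary (t + 1))
    have rnLp := LinearMap.finrank_range_add_finrank_ker ((K.deleteVertex v).boundary (t + 1))
    rw [RSCAux.finrank_chain K (t + 1)] at rnKt
    rw [RSCAux.finrank_chain (K.deleteVertex v) (t + 1)] at rnLt
    rw [RSCAux.finrank_chain K (t + 1 + 1)] at rnKp
    rw [RSCAux.finrank_chain (K.deleteVertex v) (t + 1 + 1)] at rnLp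
    have hrt := RSCAux.finrank_range_del_le K v t
    have hkt := RSCAux.finrank_ker_del_le K v t
    have hrp := RSCAux.finrank_range_del_le K v (t + 1)
    have hkp := RSCAux.finrank_ker_del_le K v (t + 1)
    have hBZK := RSCAux.finrank_range_le_ker K t
    have hBZL := RSCAux.finrank_range_le_ker (K.deleteVertex v) t
    constructor <;> omega
end

section
/- Let m ∈ ℕ (m ≥ 1) and l ∈ ℕ (l ≥ 1). Then there exists a finite connected simplicial complex K such that deg_m(v, K) = l for every vertex v of K. -/
/-!
Take the grid `{0, …, m} × ℤ/l` and, as the maximal simplices, the `l²` "lines"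
`{(i, a + b i) : i ≤ m}` for `a, b ∈ ℤ/l`. Each line has `m + 1` points, and a line is
determined by its points in the rows `0` and `1`, so the `m`-simplices are exactly the lines.
Through a point `(i, c)` there passes exactly one line of each slope `b`, hence `l` of them.
Any two points are joined through the rows `0` and `1`:
`(i, c) — (0, c) — (1, d) — (j, d)`.
-/

namespace RSC.SC

variable {V : Type*} [DecidableEq V]

def ofFacets (F : Finset (Finset V)) : SC V where
  simplices := F.biUnion fun σ => σ.powerset.filter (·.Nonempty)
  nonempty_mem σ hσ := by
    obtain ⟨_, _, hσ⟩ := Finset.mem_biUnion.mp hσ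
    exact (Finset.mem_filter.mp hσ).2
  down_closed σ hσ τ hτσ hτ := by
    simp only [Finset.mem_biUnion, Finset.mem_filter, Finset.mem_powerset] at hσ ⊢
    obtain ⟨ρ, hρ, hσρ, -⟩ := hσ
    exact ⟨ρ, hρ, hτσ.trans hσρ, hτ⟩

theorem mem_ofFacets {F : Finset (Finset V)} {τ : Finset V} :
    τ ∈ (ofFacets F).simplices ↔ (∃ σ ∈ F, τ ⊆ σ) ∧ τ.Nonempty := by
  simp only [ofFacets, Finset.mem_biUnion, Finset.mem_filter, Finset.mem_powerset]
  tauto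

theorem isVertex_ofFacets {F : Finset (Finset V)} {v : V} :
    (ofFacets F).IsVertex v ↔ ∃ σ ∈ F, v ∈ σ := by
  simp [IsVertex, mem_ofFacets]

theorem mem_ofFacets_of_mem {F : Finset (Finset V)} {σ : Finset V} (hσ : σ ∈ F)
    (hne : σ.Nonempty) : σ ∈ (ofFacets F).simplices :=
  mem_ofFacets.mpr ⟨⟨σ, hσ, subset_rfl⟩, hne⟩

/-- If all faces have `n + 1` elements, the `n`-simplices are exactly the faces. -/
theorem deg_ofFacets {F : Finset (Finset V)} {n : ℕ} (hF : ∀ σ ∈ F, σ.card = n + 1) (v : V) :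
    (ofFacets F).deg n v = (F.filter (v ∈ ·)).card := by
  refine congrArg Finset.card (Finset.ext fun τ => ?_)
  simp only [Finset.mem_filter]
  constructor
  · rintro ⟨hτ, hvτ, hcard⟩
    obtain ⟨⟨σ, hσ, hτσ⟩, -⟩ := mem_ofFacets.mp hτ
    have : τ = σ := Finset.eq_of_subset_of_card_le hτσ (by rw [hF σ hσ, hcard])
    exact ⟨this ▸ hσ, hvτ⟩
  · rintro ⟨hτ, hvτ⟩
    exact ⟨mem_ofFacets_of_mem hτ ⟨v, hvτ⟩, hvτ, hF τ hτ⟩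

theorem Reachable.symm {K : SC V} {v w : V} (h : K.Reachable v w) : K.Reachable w v := by
  induction h with
  | refl => exact Relation.ReflTransGen.refl
  | tail _ hab ih =>
    exact Relation.ReflTransGen.head (by rwa [Finset.pair_comm]) ih

theorem reachable_of_mem {K : SC V} {σ : Finset V} (hσ : σ ∈ K.simplices) {v w : V}
    (hv : v ∈ σ) (hw : w ∈ σ) : K.Reachable v w :=
  Relation.ReflTransGen.single <|
    K.down_closed σ hσ _ (Finset.insert_subset hv (Finset.singleton_subset_iff.mpr hw))
      (Finset.insert_nonempty _ _)

end RSC.SC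

namespace RSC.GridLines

open SC

variable (m l : ℕ)

/-- The grid point `(i, c)`, encoded as a natural number. -/
def point (i : ℕ) (c : ZMod l) : ℕ := i * l + c.val

def line (a b : ZMod l) : Finset ℕ :=
  (Finset.range (m + 1)).image fun i => point l i (a + b * i)

variable {m l}

theorem mem_line {v : ℕ} {a b : ZMod l} :
    v ∈ line m l a b ↔ ∃ i ≤ m, point l i (a + b * i) = v := by
  simp [line]

variable [NeZero l]

theorem point_inj {i i' : ℕ} {c c' : ZMod l} :
    point l i c = point l i' c' ↔ i = i' ∧ c = c' := by
  refine ⟨fun h => ?_, fun ⟨hi, hc⟩ => hi ▸ hc ▸ rfl⟩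
  have hl : 0 < l := Nat.pos_of_neZero l
  have hdiv (j : ℕ) (e : ZMod l) : point l j e / l = j := by
    rw [point, Nat.add_comm, Nat.add_mul_div_right _ _ hl, Nat.div_eq_of_lt e.val_lt, zero_add]
  have hmod (j : ℕ) (e : ZMod l) : point l j e % l = e.val := by
    rw [point, Nat.add_comm, Nat.add_mul_mod_self_right, Nat.mod_eq_of_lt e.val_lt]
  exact ⟨by rw [← hdiv i c, h, hdiv], ZMod.val_injective l (by rw [← hmod i c, h, hmod])⟩

theorem point_mem_line {i : ℕ} (hi : i ≤ m) {c a b : ZMod l} :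
    point l i c ∈ line m l a b ↔ a + b * i = c := by
  rw [mem_line]
  constructor
  · rintro ⟨j, -, h⟩
    obtain ⟨rfl, hc⟩ := point_inj.mp h
    exact hc
  · rintro rfl
    exact ⟨i, hi, rfl⟩

theorem card_line (a b : ZMod l) : (line m l a b).card = m + 1 := by
  rw [line, Finset.card_image_of_injective _ fun i j h => (point_inj.mp h).1,
    Finset.card_range]

theorem line_injective (hm : 1 ≤ m) :
    Function.Injective fun p : ZMod l × ZMod l => line m l p.1 p.2 := by
  rintro ⟨a, b⟩ ⟨a', b'⟩ (h : line m l a b = line m l a' b')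
  have h₀ : point l 0 a ∈ line m l a' b' := by
    rw [← h]; exact (point_mem_line (Nat.zero_le m)).mpr (by simp)
  have h₁ : point l 1 (a + b) ∈ line m l a' b' := by
    rw [← h]; exact (point_mem_line hm).mpr (by simp)
  rw [point_mem_line (Nat.zero_le m)] at h₀
  rw [point_mem_line hm] at h₁
  simp only [Nat.cast_zero, mul_zero, add_zero, Nat.cast_one, mul_one] at h₀ h₁
  subst h₀
  exact Prod.ext rfl (add_left_cancel h₁).symm

variable (m l)

def lines : Finset (Finset ℕ) :=
  Finset.univ.image fun p : ZMod l × ZMod l => line m l p.1 p.2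

def complex : SC ℕ := ofFacets (lines m l)

variable {m l}

theorem line_mem_complex (a b : ZMod l) : line m l a b ∈ (complex m l).simplices :=
  mem_ofFacets_of_mem (Finset.mem_image_of_mem _ (Finset.mem_univ (a, b)))
    (Finset.card_pos.mp (by rw [card_line]; omega))

theorem isVertex_complex {v : ℕ} :
    (complex m l).IsVertex v ↔ ∃ i ≤ m, ∃ c : ZMod l, point l i c = v := by
  simp only [complex, isVertex_ofFacets, lines, Finset.mem_image, Finset.mem_univ, true_and,
    Prod.exists]
  constructor
  · rintro ⟨_, ⟨a, b, rfl⟩, hv⟩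
    obtain ⟨i, hi, rfl⟩ := mem_line.mp hv
    exact ⟨i, hi, _, rfl⟩
  · rintro ⟨i, hi, c, rfl⟩
    exact ⟨_, ⟨c, 0, rfl⟩, (point_mem_line hi).mpr (by simp)⟩

theorem reachable_of_mem_line {v w : ℕ} {a b : ZMod l} (hv : v ∈ line m l a b)
    (hw : w ∈ line m l a b) : (complex m l).Reachable v w :=
  reachable_of_mem (line_mem_complex a b) hv hw

theorem reachable_point (hm : 1 ≤ m) {i j : ℕ} (hi : i ≤ m) (hj : j ≤ m) (c d : ZMod l) :
    (complex m l).Reachable (point l i c) (point l j d) := by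
  have horizontal {k : ℕ} (hk : k ≤ m) (e : ZMod l) :
      (complex m l).Reachable (point l k e) (point l 0 e) :=
    reachable_of_mem_line (a := e) (b := 0) ((point_mem_line hk).mpr (by simp))
      ((point_mem_line (Nat.zero_le m)).mpr (by simp))
  have slanted : (complex m l).Reachable (point l 0 c) (point l 1 d) :=
    reachable_of_mem_line (a := c) (b := d - c) ((point_mem_line (Nat.zero_le m)).mpr (by simp))
      ((point_mem_line hm).mpr (by simp))
  exact (horizontal hi c).trans <| slanted.trans <| (horizontal hm d).trans (horizontal hj d).symm

theorem deg_point (hm : 1 ≤ m) {i : ℕ} (hi : i ≤ m) (c : ZMod l) :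
    (complex m l).deg m (point l i c) = l := by
  have hfacets : ∀ σ ∈ lines m l, σ.card = m + 1 := by
    simp only [lines, Finset.mem_image]
    rintro _ ⟨p, -, rfl⟩
    exact card_line p.1 p.2
  have hthrough : (lines m l).filter (point l i c ∈ ·) =
      Finset.univ.image fun b : ZMod l => line m l (c - b * i) b := by
    ext σ
    simp only [lines, Finset.mem_filter, Finset.mem_image, Finset.mem_univ, true_and,
      Prod.exists]
    constructor
    · rintro ⟨⟨a, b, rfl⟩, hv⟩
      exact ⟨b, by rw [← (point_mem_line hi).mp hv, add_sub_cancel_right]⟩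
    · rintro ⟨b, rfl⟩
      exact ⟨⟨_, b, rfl⟩, (point_mem_line hi).mpr (sub_add_cancel c _)⟩
  rw [complex, deg_ofFacets hfacets, hthrough, Finset.card_image_of_injective,
    Finset.card_univ, ZMod.card]
  exact fun b b' h => congrArg Prod.snd
    (line_injective hm h : ((c - b * i, b) : ZMod l × ZMod l) = (c - b' * i, b'))

end RSC.GridLines

open RSC RSC.SC in
/-- for every `m ≥ 1` and `l ≥ 1` there is a (nonempty) finite
connected simplicial complex all of whose vertices have `m`-simplex degree `l`. -/
theorem exists_connected_complex_regular_deg (m l : ℕ) (hm : 1 ≤ m) (hl : 1 ≤ l) :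
    ∃ K : SC ℕ, K.simplices.Nonempty ∧
      (∀ v w, K.IsVertex v → K.IsVertex w → K.Reachable v w) ∧
      (∀ v, K.IsVertex v → K.deg m v = l) := by
  have : NeZero l := ⟨by omega⟩
  refine ⟨GridLines.complex m l, ⟨_, GridLines.line_mem_complex 0 0⟩, ?_, ?_⟩
  · intro v w hv hw
    obtain ⟨i, hi, c, rfl⟩ := GridLines.isVertex_complex.mp hv
    obtain ⟨j, hj, d, rfl⟩ := GridLines.isVertex_complex.mp hw
    exact GridLines.reachable_point hm hi hj c d
  · intro v hv
    obtain ⟨i, hi, c, rfl⟩ := GridLines.isVertex_complex.mp hv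
    exact GridLines.deg_point hm hi c
end
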